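/- arXiv:1301.1101 — 7 statements merged into one kernel-verified Lean document; each statement's English description precedes it below -/
import Mathlib

section
/- Let p be an odd prime such that 2 is a primitive root modulo p, and let d = (p-1)/2. Then the polynomial S_d(y) + S_{d-1}(y) is irreducible in 𝔽₂[y]. -/
open Polynomial


lemma geomIrred (p : ℕ) (hp : p.Prime) (hodd : Odd p)
    (hprim : orderOf (2 : ZMod p) = p - 1) :
    Irreducible (∑ i ∈ Finset.range p, (X : Polynomial (ZMod 2)) ^ i) := by
  have hp3 : 3 ≤ p := by
    have h2 := hp.two_le
    rcases hodd with ⟨m, hm⟩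
    omega
  set Ψ : Polynomial (ZMod 2) := ∑ i ∈ Finset.range p, X ^ i with hΨ
  haveI : Fact p.Prime := ⟨hp⟩
  have hcyc : Ψ = cyclotomic p (ZMod 2) := by
    rw [cyclotomic_prime (ZMod 2) p]
  have hmonic : Ψ.Monic := by rw [hcyc]; exact cyclotomic.monic p _
  have hdeg : Ψ.natDegree = p - 1 := by
    rw [hcyc, natDegree_cyclotomic, Nat.totient_prime hp]
  have hne : Ψ ≠ 0 := hmonic.ne_zero
  have hnu : ¬ IsUnit Ψ := by
    apply not_isUnit_of_natDegree_pos
    omega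
  obtain ⟨g, hgirr, hgdvd⟩ := WfDvdMonoid.exists_irreducible_factor hnu hne
  -- show natDegree g ≥ p - 1
  have hgdeg : p - 1 ≤ g.natDegree := by
    haveI : Fact (Irreducible g) := ⟨hgirr⟩
    set K := AdjoinRoot g
    set α : K := AdjoinRoot.root g
    have hαΨ : aeval α Ψ = 0 := by
      rw [AdjoinRoot.aeval_eq, AdjoinRoot.mk_eq_zero]
      exact hgdvd
    haveI : CharP K 2 := charP_of_injective_algebraMap (algebraMap (ZMod 2) K).injective 2
    have hα1 : α ≠ 1 := by
      intro h
      rw [h] at hαΨ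
      simp only [hΨ, map_sum, map_pow, aeval_X, one_pow, Finset.sum_const,
        Finset.card_range, nsmul_eq_mul, mul_one] at hαΨ
      rw [CharP.cast_eq_zero_iff K 2 p] at hαΨ
      rcases hodd with ⟨m, hm⟩
      omega
    have hαp : α ^ p = 1 := by
      have := geom_sum_mul (α : K) p
      have h2 : (∑ i ∈ Finset.range p, α ^ i) = aeval α Ψ := by
        simp [hΨ]
      rw [h2, hαΨ, zero_mul] at this
      linear_combination -this
    have hα0 : α ≠ 0 := by
      intro h
      rw [h, zero_pow (by omega : p ≠ 0)] at hαp
      exact zero_ne_one hαp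
    have hord : orderOf α = p := by
      have h1 : orderOf α ∣ p := orderOf_dvd_of_pow_eq_one hαp
      rcases (Nat.Prime.eq_one_or_self_of_dvd hp _ h1) with h | h
      · exact absurd (orderOf_eq_one_iff.mp h) hα1
      · exact h
    -- K is a finite field of card 2 ^ natDegree g
    have hgne : g ≠ 0 := hgirr.ne_zero
    haveI : FiniteDimensional (ZMod 2) K :=
      Module.Finite.of_basis (AdjoinRoot.powerBasis hgne).basis
    haveI : Finite K := Module.finite_of_finite (ZMod 2)
    cases nonempty_fintype K
    have hcard : Fintype.card K = 2 ^ g.natDegree := by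
      rw [Module.card_eq_pow_finrank (K := ZMod 2) (V := K), ZMod.card]
      congr 1
      rw [(AdjoinRoot.powerBasis hgne).finrank, AdjoinRoot.powerBasis_dim]
    have hpow : α ^ (2 ^ g.natDegree - 1) = 1 := by
      rw [← hcard]
      exact FiniteField.pow_card_sub_one_eq_one α hα0
    have hdvd : p ∣ 2 ^ g.natDegree - 1 := by
      rw [← hord]
      exact orderOf_dvd_of_pow_eq_one hpow
    have h2k : (2 : ZMod p) ^ g.natDegree = 1 := by
      have h1 : (1 : ℕ) ≤ 2 ^ g.natDegree := Nat.one_le_two_pow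
      have := (ZMod.natCast_eq_zero_iff _ p).mpr hdvd
      push_cast [Nat.cast_sub h1] at this
      linear_combination this
    have := orderOf_dvd_of_pow_eq_one h2k
    rw [hprim] at this
    have hkpos : 0 < g.natDegree := hgirr.natDegree_pos
    exact Nat.le_of_dvd hkpos this
  -- conclude
  obtain ⟨c, hc⟩ := hgdvd
  have hgne : g ≠ 0 := hgirr.ne_zero
  have hcne : c ≠ 0 := by rintro rfl; simp at hc; exact hne hc
  have hdegc : c.natDegree = 0 := by
    have := natDegree_mul hgne hcne
    rw [← hc, hdeg] at this
    omega
  have hcu : IsUnit c := by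
    rw [Polynomial.isUnit_iff_degree_eq_zero, Polynomial.degree_eq_natDegree hcne, hdegc,
      Nat.cast_zero]
  have hass : Associated g Ψ := ⟨hcu.unit, by rw [IsUnit.unit_spec]; exact hc.symm⟩
  exact hass.irreducible hgirr

noncomputable def psiH : ZMod 2 →+* RatFunc (ZMod 2) :=
  (algebraMap (Polynomial (ZMod 2)) (RatFunc (ZMod 2))).comp (Polynomial.C)

noncomputable def Gam (g : Polynomial (ZMod 2)) : Polynomial (ZMod 2) :=
  ∑ k ∈ Finset.range (g.natDegree + 1),
    Polynomial.C (g.coeff k) * (X ^ (g.natDegree - k) * (X ^ 2 + 1) ^ k)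

lemma monic_X2add1 : (X ^ 2 + 1 : Polynomial (ZMod 2)).Monic := by
  have := Polynomial.monic_X_pow_add (R := ZMod 2) (p := 1) (n := 2) (by
    simpa using Polynomial.degree_one_le.trans (by norm_num))
  simpa using this

lemma deg_X2add1 : (X ^ 2 + 1 : Polynomial (ZMod 2)).natDegree = 2 := by
  have := Polynomial.natDegree_X_pow_add_C (R := ZMod 2) (n := 2) (r := 1)
  simpa using this

lemma coeff_Gam (g : Polynomial (ZMod 2)) :
    (Gam g).coeff (2 * g.natDegree) = g.leadingCoeff := by
  set m := g.natDegree
  rw [Gam, Finset.sum_range_succ, Polynomial.coeff_add, Polynomial.finset_sum_coeff]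
  have h1 : ∀ k ∈ Finset.range m,
      (C (g.coeff k) * (X ^ (g.natDegree - k) * (X ^ 2 + 1) ^ k)).coeff (2 * m) = 0 := by
    intro k hk
    rw [Finset.mem_range] at hk
    apply Polynomial.coeff_eq_zero_of_natDegree_lt
    calc (C (g.coeff k) * (X ^ (g.natDegree - k) * (X ^ 2 + 1) ^ k)).natDegree
        ≤ (C (g.coeff k)).natDegree + (X ^ (g.natDegree - k) * (X ^ 2 + 1) ^ k : Polynomial (ZMod 2)).natDegree :=
          Polynomial.natDegree_mul_le
      _ ≤ 0 + ((X ^ (g.natDegree - k) : Polynomial (ZMod 2)).natDegree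
            + ((X ^ 2 + 1 : Polynomial (ZMod 2)) ^ k).natDegree) := by
          gcongr
          · exact le_of_eq (Polynomial.natDegree_C _)
          · exact Polynomial.natDegree_mul_le
      _ ≤ (g.natDegree - k) + 2 * k := by
          rw [zero_add, Polynomial.natDegree_X_pow]
          gcongr
          rw [Polynomial.natDegree_pow, deg_X2add1]
          omega
      _ < 2 * m := by omega
  rw [Finset.sum_eq_zero h1, zero_add, Nat.sub_self, pow_zero, one_mul]
  rw [Polynomial.coeff_C_mul]
  have h2 : ((X ^ 2 + 1 : Polynomial (ZMod 2)) ^ m).coeff (2 * m) = 1 := by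
    have hmon : ((X ^ 2 + 1 : Polynomial (ZMod 2)) ^ m).Monic := monic_X2add1.pow m
    have hdeg : ((X ^ 2 + 1 : Polynomial (ZMod 2)) ^ m).natDegree = 2 * m := by
      rw [Polynomial.natDegree_pow, deg_X2add1]
      omega
    rw [← hdeg]
    exact hmon.coeff_natDegree
  rw [h2, mul_one]
  rfl

lemma map_Gam (g : Polynomial (ZMod 2)) :
    algebraMap (Polynomial (ZMod 2)) (RatFunc (ZMod 2)) (Gam g) =
      RatFunc.X ^ g.natDegree * Polynomial.eval₂ psiH (RatFunc.X + RatFunc.X⁻¹) g := by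
  set x : RatFunc (ZMod 2) := RatFunc.X
  have hx : x ≠ 0 := RatFunc.X_ne_zero
  have hkey : x * (x + x⁻¹) = x ^ 2 + 1 := by
    field_simp
  rw [Polynomial.eval₂_eq_sum_range, Gam, map_sum, Finset.mul_sum]
  apply Finset.sum_congr rfl
  intro k hk
  rw [Finset.mem_range] at hk
  have hk' : k ≤ g.natDegree := by omega
  rw [map_mul, map_mul, map_pow, map_pow]
  rw [RatFunc.algebraMap_X]
  have h1 : algebraMap (Polynomial (ZMod 2)) (RatFunc (ZMod 2)) (X ^ 2 + 1) = x ^ 2 + 1 := by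
    rw [map_add, map_pow, RatFunc.algebraMap_X, map_one]
  rw [h1]
  have h2 : psiH (g.coeff k) = algebraMap (Polynomial (ZMod 2)) (RatFunc (ZMod 2)) (C (g.coeff k)) := rfl
  rw [h2]
  rw [← hkey, mul_pow]
  have h3 : x ^ g.natDegree = x ^ (g.natDegree - k) * x ^ k := by
    rw [← pow_add, Nat.sub_add_cancel hk']
  rw [h3]
  ring

section Saux
variable (S : ℤ → Polynomial (ZMod 2)) (hS0 : S 0 = 1) (hS1 : S 1 = X)
  (hrec : ∀ i : ℤ, S (i + 1) = X * S i - S (i - 1))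

include hrec in
lemma S_step : ∀ n : ℕ, S ((n + 2 : ℕ) : ℤ) = X * S ((n + 1 : ℕ) : ℤ) - S (n : ℤ) := by
  intro n
  have h := hrec ((n : ℤ) + 1)
  rw [show ((n : ℤ) + 1 + 1) = ((n + 2 : ℕ) : ℤ) by push_cast; ring,
    show ((n : ℤ) + 1 - 1) = (n : ℤ) by ring,
    show ((n : ℤ) + 1) = ((n + 1 : ℕ) : ℤ) by push_cast; ring] at h
  exact h

include hS0 hS1 hrec in
lemma S_monic : ∀ n : ℕ, (S n).Monic ∧ (S n).natDegree = n := by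
  intro n
  induction n using Nat.twoStepInduction with
  | zero => rw [Nat.cast_zero, hS0]; exact ⟨monic_one, natDegree_one⟩
  | one => rw [Nat.cast_one, hS1]; exact ⟨monic_X, natDegree_X⟩
  | more n ih1 ih2 =>
    obtain ⟨hm1, hd1⟩ := ih1
    obtain ⟨hm2, hd2⟩ := ih2
    rw [S_step S hrec n]
    have hmul : (X * S ((n + 1 : ℕ) : ℤ)).Monic := monic_X.mul hm2
    have hdmul : (X * S ((n + 1 : ℕ) : ℤ)).natDegree = n + 2 := by
      rw [natDegree_mul X_ne_zero hm2.ne_zero, natDegree_X, hd2]; omega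
    have hlt : (S (n : ℤ)).degree < (X * S ((n + 1 : ℕ) : ℤ)).degree := by
      rw [Polynomial.degree_eq_natDegree hmul.ne_zero, hdmul,
        Polynomial.degree_eq_natDegree hm1.ne_zero, hd1]
      exact_mod_cast (by omega : n < n + 2)
    constructor
    · have := hmul.add_of_left (q := -(S (n : ℤ))) (by rwa [degree_neg])
      simpa [sub_eq_add_neg] using this
    · rw [natDegree_eq_of_degree_eq (degree_sub_eq_left_of_degree_lt hlt), hdmul]


include hS0 hS1 hrec in
lemma S_eval : ∀ n : ℕ, RatFunc.X ^ n * Polynomial.eval₂ psiH (RatFunc.X + RatFunc.X⁻¹) (S n)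
    = ∑ j ∈ Finset.range (n + 1), RatFunc.X ^ (2 * j) := by
  set x : RatFunc (ZMod 2) := RatFunc.X with hxdef
  have hx : x ≠ 0 := RatFunc.X_ne_zero
  have hkey : x * (x + x⁻¹) = x ^ 2 + 1 := by field_simp
  intro n
  induction n using Nat.twoStepInduction with
  | zero => rw [Nat.cast_zero, hS0]; simp
  | one =>
    rw [Nat.cast_one, hS1, eval₂_X, pow_one, hkey]
    rw [Finset.sum_range_succ, Finset.sum_range_one]
    ring
  | more n ih1 ih2 =>
    rw [S_step S hrec n, eval₂_sub, eval₂_mul, eval₂_X]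
    have e1 : x ^ (n + 2) * ((x + x⁻¹) * eval₂ psiH (x + x⁻¹) (S ((n + 1 : ℕ) : ℤ))
        - eval₂ psiH (x + x⁻¹) (S (n : ℤ)))
        = (x ^ 2 + 1) * (x ^ (n + 1) * eval₂ psiH (x + x⁻¹) (S ((n + 1 : ℕ) : ℤ)))
          - x ^ 2 * (x ^ n * eval₂ psiH (x + x⁻¹) (S (n : ℤ))) := by
      rw [← hkey]; ring
    have hstep2 : (x ^ 2 + 1) * (∑ j ∈ Finset.range (n + 2), x ^ (2 * j))
        - x ^ 2 * ∑ j ∈ Finset.range (n + 1), x ^ (2 * j)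
        = ∑ j ∈ Finset.range (n + 3), x ^ (2 * j) := by
      have h1 : ∑ j ∈ Finset.range (n + 2), x ^ (2 * j)
          = (∑ j ∈ Finset.range (n + 1), x ^ (2 * j)) + x ^ (2 * (n + 1)) :=
        Finset.sum_range_succ _ _
      have h2 : ∑ j ∈ Finset.range (n + 3), x ^ (2 * j)
          = ((∑ j ∈ Finset.range (n + 1), x ^ (2 * j)) + x ^ (2 * (n + 1))) + x ^ (2 * (n + 2)) := by
        rw [Finset.sum_range_succ, Finset.sum_range_succ]
      rw [h1, h2]
      ring
    rw [e1, ih1, ih2]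
    exact hstep2

end Saux

lemma not_isUnit_Gam (g : Polynomial (ZMod 2)) (hg : g ≠ 0) (h1 : 0 < g.natDegree) :
    ¬ IsUnit (Gam g) := by
  apply not_isUnit_of_natDegree_pos
  have hcoeff := coeff_Gam g
  have hle : 2 * g.natDegree ≤ (Gam g).natDegree := by
    apply le_natDegree_of_ne_zero
    rw [hcoeff]
    exact leadingCoeff_ne_zero.mpr hg
  omega

lemma comb_sum (x : RatFunc (ZMod 2)) : ∀ n : ℕ,
    (∑ j ∈ Finset.range (n + 1), x ^ (2 * j)) + x * ∑ j ∈ Finset.range n, x ^ (2 * j)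
      = ∑ k ∈ Finset.range (2 * n + 1), x ^ k := by
  intro n
  induction n with
  | zero => simp
  | succ n ih =>
    rw [show 2 * (n + 1) + 1 = (2 * n + 1) + 1 + 1 by omega]
    simp only [Finset.sum_range_succ] at ih ⊢
    linear_combination ih

open Polynomial in
theorem stmt7 (p : ℕ) (hp : p.Prime) (hodd : Odd p)
    (hprim : orderOf (2 : ZMod p) = p - 1)
    (d : ℕ) (hd : d = (p - 1) / 2)
    (S : ℤ → Polynomial (ZMod 2)) (hS0 : S 0 = 1) (hS1 : S 1 = X)
    (hrec : ∀ i : ℤ, S (i + 1) = X * S i - S (i - 1)) :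
    Irreducible (S d + S ((d : ℤ) - 1)) := by
  have hp3 : 3 ≤ p := by
    have h2 := hp.two_le
    rcases hodd with ⟨m, hm⟩
    omega
  have hpd : p = 2 * d + 1 := by
    rcases hodd with ⟨m, hm⟩
    omega
  have hd1 : 1 ≤ d := by omega
  have hcast : ((d : ℤ) - 1) = ((d - 1 : ℕ) : ℤ) := by push_cast [Nat.cast_sub hd1]; ring
  obtain ⟨hmd, hdd⟩ := S_monic S hS0 hS1 hrec d
  obtain ⟨hmd1, hdd1⟩ := S_monic S hS0 hS1 hrec (d - 1)
  rw [hcast]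
  set f := S (d : ℤ) + S ((d - 1 : ℕ) : ℤ) with hf
  have hlt : (S ((d - 1 : ℕ) : ℤ)).degree < (S (d : ℤ)).degree := by
    rw [Polynomial.degree_eq_natDegree hmd.ne_zero, hdd,
      Polynomial.degree_eq_natDegree hmd1.ne_zero, hdd1]
    exact_mod_cast (by omega : d - 1 < d)
  have hfm : f.Monic := hmd.add_of_left hlt
  have hfd : f.natDegree = d := by
    rw [hf, natDegree_eq_of_degree_eq (degree_add_eq_left_of_degree_lt hlt), hdd]
  constructor
  · exact not_isUnit_of_natDegree_pos f (by omega)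
  · intro a b hab
    by_contra hcon
    push_neg at hcon
    obtain ⟨ha, hb⟩ := hcon
    have hf0 : f ≠ 0 := hfm.ne_zero
    have ha0 : a ≠ 0 := by rintro rfl; rw [zero_mul] at hab; exact hf0 hab
    have hb0 : b ≠ 0 := by rintro rfl; rw [mul_zero] at hab; exact hf0 hab
    have hdegpos : ∀ c : Polynomial (ZMod 2), c ≠ 0 → ¬ IsUnit c → 0 < c.natDegree := by
      intro c hc0 hcu
      by_contra h
      push_neg at h
      have h0 : c.natDegree = 0 := by omega
      apply hcu
      rw [eq_C_of_natDegree_eq_zero h0]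
      apply isUnit_C.mpr
      have hc : c.coeff 0 ≠ 0 := by
        intro hcc
        apply hc0
        rw [eq_C_of_natDegree_eq_zero h0, hcc, map_zero]
      exact hc.isUnit
    have hna : 0 < a.natDegree := hdegpos a ha0 ha
    have hnb : 0 < b.natDegree := hdegpos b hb0 hb
    have hsum : a.natDegree + b.natDegree = d := by
      have h := natDegree_mul ha0 hb0
      rw [← hab, hfd] at h
      omega
    set x : RatFunc (ZMod 2) := RatFunc.X with hxdef
    have hx : x ≠ 0 := RatFunc.X_ne_zero
    have hEf : x ^ d * Polynomial.eval₂ psiH (x + x⁻¹) f = ∑ k ∈ Finset.range p, x ^ k := by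
      rw [hf, eval₂_add, mul_add]
      have hA := S_eval S hS0 hS1 hrec d
      have hB := S_eval S hS0 hS1 hrec (d - 1)
      rw [← hxdef] at hA hB
      have hxd : x ^ d = x * x ^ (d - 1) := by
        rw [← pow_succ']
        congr 1
        omega
      calc x ^ d * eval₂ psiH (x + x⁻¹) (S (d : ℤ)) + x ^ d * eval₂ psiH (x + x⁻¹) (S ((d - 1 : ℕ) : ℤ))
          = x ^ d * eval₂ psiH (x + x⁻¹) (S (d : ℤ))
            + x * (x ^ (d - 1) * eval₂ psiH (x + x⁻¹) (S ((d - 1 : ℕ) : ℤ))) := by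
            rw [hxd]; ring
        _ = (∑ j ∈ Finset.range (d + 1), x ^ (2 * j))
            + x * ∑ j ∈ Finset.range ((d - 1) + 1), x ^ (2 * j) := by rw [hA, hB]
        _ = ∑ k ∈ Finset.range (2 * d + 1), x ^ k := by
            rw [show (d - 1) + 1 = d by omega]
            exact comb_sum x d
        _ = ∑ k ∈ Finset.range p, x ^ k := by rw [← hpd]
    have hmap : (algebraMap (Polynomial (ZMod 2)) (RatFunc (ZMod 2))) (Gam a * Gam b)
        = (algebraMap (Polynomial (ZMod 2)) (RatFunc (ZMod 2))) (∑ i ∈ Finset.range p, X ^ i) := by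
      rw [map_mul, map_Gam, map_Gam, ← hxdef]
      have hEab : eval₂ psiH (x + x⁻¹) a * eval₂ psiH (x + x⁻¹) b = eval₂ psiH (x + x⁻¹) f := by
        rw [← eval₂_mul, ← hab]
      calc (x ^ a.natDegree * eval₂ psiH (x + x⁻¹) a) * (x ^ b.natDegree * eval₂ psiH (x + x⁻¹) b)
          = x ^ (a.natDegree + b.natDegree) * (eval₂ psiH (x + x⁻¹) a * eval₂ psiH (x + x⁻¹) b) := by
            rw [pow_add]; ring
        _ = x ^ d * eval₂ psiH (x + x⁻¹) f := by rw [hsum, hEab]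
        _ = ∑ k ∈ Finset.range p, x ^ k := hEf
        _ = algebraMap (Polynomial (ZMod 2)) (RatFunc (ZMod 2)) (∑ i ∈ Finset.range p, X ^ i) := by
            rw [map_sum]
            refine Finset.sum_congr rfl fun i _ => ?_
            rw [map_pow, RatFunc.algebraMap_X, ← hxdef]
    have heq : Gam a * Gam b = ∑ i ∈ Finset.range p, X ^ i :=
      RatFunc.algebraMap_injective (ZMod 2) hmap
    rcases (geomIrred p hp hodd hprim).isUnit_or_isUnit heq.symm with h | h
    · exact not_isUnit_Gam a ha0 hna h
    · exact not_isUnit_Gam b hb0 hnb h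
end

section
/- Let m ≥ 1 and define, at x = 2, α(y) = 1 - (y - 2)·S_{m-1}(y)·(S_{m-1}(y) - S_{m-2}(y)) and λ(y) = 2 + (y-2)²·S_{m-1}(y)². Then α(y)² - α(y)·λ(y) + 1 = (y - 2)³·S_{m-1}(y)⁴ as polynomials in ℤ[y]. -/
open Polynomial in
theorem stmt11 (S : ℤ → Polynomial ℤ) (hS0 : S 0 = 1) (hS1 : S 1 = X)
    (hrec : ∀ i : ℤ, S (i + 1) = X * S i - S (i - 1))
    (m : ℤ) (hm : 1 ≤ m)
    (α lam : Polynomial ℤ)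
    (hα : α = 1 - (X - C 2) * S (m - 1) * (S (m - 1) - S (m - 2)))
    (hlam : lam = C 2 + (X - C 2) ^ 2 * (S (m - 1)) ^ 2) :
    α ^ 2 - α * lam + 1 = (X - C 2) ^ 3 * (S (m - 1)) ^ 4 := by
  have hm1 : S (-1) = 0 := by
    have h0 := hrec 0
    simp only [zero_add, zero_sub] at h0
    rw [hS0, hS1] at h0
    linear_combination h0
  have key : ∀ n : ℕ, S n ^ 2 + S ((n : ℤ) - 1) ^ 2 - X * S n * S ((n : ℤ) - 1) = 1 := by
    intro n
    induction n with
    | zero => norm_num [hS0, hm1]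
    | succ n ih =>
      have h := hrec n
      push_cast
      have e : (n : ℤ) + 1 - 1 = (n : ℤ) := by ring
      rw [e, h]
      linear_combination ih
  obtain ⟨n, hn⟩ : ∃ n : ℕ, m - 1 = (n : ℤ) := ⟨(m - 1).toNat, by omega⟩
  have hk := key n
  rw [← hn] at hk
  have e2 : (m - 1) - 1 = m - 2 := by ring
  rw [e2] at hk
  rw [hα, hlam]
  have hC : (C 2 : Polynomial ℤ) = 2 := by norm_num
  rw [hC]
  linear_combination ((X : Polynomial ℤ) - 2) ^ 2 * (S (m - 1)) ^ 2 * hk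
end

section
/- Let m ≥ 0 and define, at x = 2, α(y) = 1 + (y - 2)·S_{m-1}(y)·(S_m(y) - S_{m-1}(y)) and λ(y) = 4 - y - (y - 2)²·S_m(y)·S_{m-1}(y). Then α(y)² - α(y)·λ(y) + 1 = (y - 2)·((y - 2)·S_m(y)·S_{m-1}(y) + 1)² in ℤ[y]. -/
/-!
The sequence is Mathlib's rescaled Chebyshev sequence `Polynomial.Chebyshev.S`, which satisfies the
Cassini-type identity `S (k - 1) ^ 2 + S k ^ 2 - X * S (k - 1) * S k = 1` for every integer `k`.
Multiplied by `(X - 2) ^ 2 * S (m - 1) ^ 2`, this identity is exactly the difference of the two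
sides of the claimed equation.
-/

open Polynomial

theorem Polynomial.Chebyshev.eq_S_of_recurrence {R : Type*} [CommRing R] (S : ℤ → R[X])
    (hS0 : S 0 = 1) (hS1 : S 1 = X) (hrec : ∀ i : ℤ, S (i + 1) = X * S i - S (i - 1)) :
    S = Chebyshev.S R := by
  funext n
  induction n using Polynomial.Chebyshev.induct with
  | zero => rw [hS0, Chebyshev.S_zero]
  | one => rw [hS1, Chebyshev.S_one]
  | add_two n ih1 ih0 =>
    have h := hrec (n + 1)
    rw [add_sub_cancel_right, add_assoc, one_add_one_eq_two] at h
    rw [Chebyshev.S_add_two, ← ih1, ← ih0, h]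
  | neg_add_one n ih0 ih1 =>
    rw [Chebyshev.S_sub_one, ← ih0, ← ih1]
    linear_combination hrec (-n)

theorem stmt12_general (S : ℤ → Polynomial ℤ) (hS0 : S 0 = 1) (hS1 : S 1 = X)
    (hrec : ∀ i : ℤ, S (i + 1) = X * S i - S (i - 1))
    (m : ℤ)
    (α lam : Polynomial ℤ)
    (hα : α = 1 + (X - C 2) * S (m - 1) * (S m - S (m - 1)))
    (hlam : lam = C 4 - X - (X - C 2) ^ 2 * S m * S (m - 1)) :
    α ^ 2 - α * lam + 1 = (X - C 2) * ((X - C 2) * S m * S (m - 1) + 1) ^ 2 := by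
  obtain rfl := Chebyshev.eq_S_of_recurrence S hS0 hS1 hrec
  have cassini := Chebyshev.S_sq_add_S_sq ℤ (m - 1)
  rw [sub_add_cancel] at cassini
  subst hα hlam
  simp only [C_ofNat]
  linear_combination ((X - 2) ^ 2 * Chebyshev.S ℤ (m - 1) ^ 2) * cassini

open Polynomial in
theorem stmt12 (S : ℤ → Polynomial ℤ) (hS0 : S 0 = 1) (hS1 : S 1 = X)
    (hrec : ∀ i : ℤ, S (i + 1) = X * S i - S (i - 1))
    (m : ℤ) (hm : 0 ≤ m)
    (α lam : Polynomial ℤ)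
    (hα : α = 1 + (X - C 2) * S (m - 1) * (S m - S (m - 1)))
    (hlam : lam = C 4 - X - (X - C 2) ^ 2 * S m * S (m - 1)) :
    α ^ 2 - α * lam + 1 = (X - C 2) * ((X - C 2) * S m * S (m - 1) + 1) ^ 2 :=
  stmt12_general S hS0 hS1 hrec m α lam hα hlam
end

section
/- Suppose α, λ ∈ ℂ and n is an integer with S_{n-1}(λ)·α - S_{n-2}(λ) = 0. Then (α² - α·λ + 1)·S_{n-1}(λ)² = 1. -/
/-! The quadratic form `S i ^ 2 - λ S i S (i - 1) + S (i - 1) ^ 2` is invariant under the shift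
`i ↦ i + 1` of the recurrence (a Cassini identity), and equals `1` at `i = 1`. The hypothesis says
`S (n - 2) = α S (n - 1)`; substituting this into the identity at `i = n - 1` gives the claim. -/

section Cassini

variable {R : Type*} [CommRing R] (lam : R) (S : ℤ → R)

def cassiniForm (i : ℤ) : R := S i ^ 2 - lam * S i * S (i - 1) + S (i - 1) ^ 2

theorem cassiniForm_periodic (hrec : ∀ i : ℤ, S (i + 1) = lam * S i - S (i - 1)) :
    Function.Periodic (cassiniForm lam S) 1 := by
  intro i
  simp only [cassiniForm, add_sub_cancel_right]
  linear_combination (S (i + 1) - S (i - 1)) * hrec i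

theorem cassiniForm_eq_one (hS0 : S 0 = 1) (hS1 : S 1 = lam)
    (hrec : ∀ i : ℤ, S (i + 1) = lam * S i - S (i - 1)) (i : ℤ) :
    cassiniForm lam S i = 1 := by
  have hper := cassiniForm_periodic lam S hrec
  have h1 : cassiniForm lam S 1 = 1 := by
    simp only [cassiniForm, sub_self, hS0, hS1]
    ring
  calc cassiniForm lam S i = cassiniForm lam S 0 := by simpa using hper.zsmul_eq i
    _ = cassiniForm lam S 1 := by simpa using (hper 0).symm
    _ = 1 := h1

end Cassini

theorem stmt13 (α lam : ℂ) (S : ℤ → ℂ) (hS0 : S 0 = 1) (hS1 : S 1 = lam)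
    (hrec : ∀ i : ℤ, S (i + 1) = lam * S i - S (i - 1))
    (n : ℤ) (h : S (n - 1) * α - S (n - 2) = 0) :
    (α ^ 2 - α * lam + 1) * (S (n - 1)) ^ 2 = 1 := by
  have cassini := cassiniForm_eq_one lam S hS0 hS1 hrec (n - 1)
  rw [cassiniForm, show n - 1 - 1 = n - 2 by ring, ← sub_eq_zero.mp h] at cassini
  linear_combination cassini
end

section
/- Let m ≥ 1, n ≠ 0 be integers and let y ∈ ℝ satisfy φ(y) := S_{n-1}(λ(y))·α(y) - S_{n-2}(λ(y)) = 0, where α(y) = 1 - (y-2)·S_{m-1}(y)·(S_{m-1}(y) - S_{m-2}(y)) and λ(y) = 2 + (y-2)²·S_{m-1}(y)². Then y > 2. -/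
/-!
Suppose `y ≤ 2`. The quadratic form `Q_t(a, b) = a² + b² - t a b` is invariant under the step
`(a, b) ↦ (t a - b, a)` of the recurrence `u (i + 1) = t u (i) - u (i - 1)`. Along
`T i = S_{i-1}(λ) α - S_{i-2}(λ)`, which solves the recurrence with `t = λ ≥ 2`, the invariant equals
`Q_λ(α, 1) = (y - 2)³ S_{m-1}(y)⁴ ≤ 0` (using `Q_y(S_{m-1}(y), S_{m-2}(y)) = 1`). A nonpositive
invariant with `t ≥ 0` forbids a sign change between consecutive terms, so `T` stays positive
starting from `T 0 = 1`; but `φ(y) = T n`.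
-/

def chebyshevForm {R : Type*} [CommRing R] (t a b : R) : R := a ^ 2 + b ^ 2 - t * a * b

def IsChebyshevRec {R : Type*} [CommRing R] (t : R) (u : ℤ → R) : Prop :=
  ∀ i, u (i + 1) = t * u i - u (i - 1)

section CommRing

variable {R : Type*} [CommRing R]

theorem chebyshevForm_comm (t a b : R) : chebyshevForm t a b = chebyshevForm t b a := by
  unfold chebyshevForm; ring

theorem chebyshevForm_step (t a b : R) : chebyshevForm t (t * a - b) a = chebyshevForm t a b := by
  unfold chebyshevForm; ring

namespace IsChebyshevRec

variable {t : R} {u : ℤ → R}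

theorem chebyshevForm_eq (hu : IsChebyshevRec t u) (i : ℤ) :
    chebyshevForm t (u (i + 1)) (u i) = chebyshevForm t (u 1) (u 0) := by
  have step (k : ℤ) : chebyshevForm t (u (k + 1 + 1)) (u (k + 1)) =
      chebyshevForm t (u (k + 1)) (u k) := by
    rw [hu (k + 1), add_sub_cancel_right, chebyshevForm_step]
  induction i using Int.induction_on with
  | zero => simp
  | succ k ih => rw [step, ih]
  | pred k ih => rw [← ih, ← step, sub_add_cancel]

theorem sub_one_mul_sub_sub_two (hu : IsChebyshevRec t u) (a : R) :
    IsChebyshevRec t (fun i => u (i - 1) * a - u (i - 2)) := by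
  intro i
  have h1 := hu (i - 1)
  have h2 := hu (i - 2)
  rw [sub_add_cancel, show i - 1 - 1 = i - 2 by ring] at h1
  rw [show i - 2 + 1 = i - 1 by ring, show i - 2 - 1 = i - 3 by ring] at h2
  dsimp only
  rw [show i + 1 - 1 = i by ring, show i + 1 - 2 = i - 1 by ring, show i - 1 - 1 = i - 2 by ring,
    show i - 1 - 2 = i - 3 by ring]
  linear_combination a * h1 - h2

variable {z : R}

theorem apply_neg_one (hu : IsChebyshevRec z u) (h0 : u 0 = 1) (h1 : u 1 = z) : u (-1) = 0 := by
  have := hu 0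
  rw [zero_add, zero_sub, h0, h1] at this
  linear_combination this

theorem apply_neg_two (hu : IsChebyshevRec z u) (h0 : u 0 = 1) (h1 : u 1 = z) : u (-2) = -1 := by
  have := hu (-1)
  norm_num [h0, hu.apply_neg_one h0 h1] at this
  linear_combination this

theorem chebyshevForm_eq_one (hu : IsChebyshevRec z u) (h0 : u 0 = 1) (h1 : u 1 = z) (i : ℤ) :
    chebyshevForm z (u (i + 1)) (u i) = 1 := by
  rw [hu.chebyshevForm_eq, h0, h1, chebyshevForm]; ring

end IsChebyshevRec

theorem chebyshevForm_riley (y c d : R) (hcd : chebyshevForm y c d = 1) :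
    chebyshevForm (2 + (y - 2) ^ 2 * c ^ 2) (1 - (y - 2) * c * (c - d)) 1 = (y - 2) ^ 3 * c ^ 4 := by
  unfold chebyshevForm at *
  linear_combination (y - 2) ^ 2 * c ^ 2 * hcd

end CommRing

section Ordered

variable {R : Type*} [CommRing R] [LinearOrder R] [IsStrictOrderedRing R] {t : R}

theorem pos_of_chebyshevForm_nonpos {a b : R} (ht : 0 ≤ t) (hQ : chebyshevForm t a b ≤ 0)
    (hb : 0 < b) : 0 < a := by
  by_contra! ha
  have : t * a * b ≤ 0 :=
    mul_nonpos_of_nonpos_of_nonneg (mul_nonpos_of_nonneg_of_nonpos ht ha) hb.le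
  unfold chebyshevForm at hQ
  nlinarith [sq_nonneg a, mul_pos hb hb]

theorem IsChebyshevRec.pos {u : ℤ → R} (hu : IsChebyshevRec t u) (ht : 0 ≤ t)
    (hQ : chebyshevForm t (u 1) (u 0) ≤ 0) (h0 : 0 < u 0) (i : ℤ) : 0 < u i := by
  induction i using Int.induction_on with
  | zero => exact h0
  | succ k ih => exact pos_of_chebyshevForm_nonpos ht (hu.chebyshevForm_eq k ▸ hQ) ih
  | pred k ih =>
    have hQk := hu.chebyshevForm_eq (-k - 1)
    rw [sub_add_cancel, chebyshevForm_comm] at hQk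
    exact pos_of_chebyshevForm_nonpos ht (hQk ▸ hQ) ih

end Ordered

theorem stmt14_general (S : ℤ → ℝ → ℝ) (hS0 : ∀ z, S 0 z = 1) (hS1 : ∀ z, S 1 z = z)
    (hrec : ∀ (i : ℤ) (z : ℝ), S (i + 1) z = z * S i z - S (i - 1) z)
    (m n : ℤ)
    (y : ℝ)
    (α lam : ℝ)
    (hα : α = 1 - (y - 2) * S (m - 1) y * (S (m - 1) y - S (m - 2) y))
    (hlam : lam = 2 + (y - 2) ^ 2 * (S (m - 1) y) ^ 2)
    (hφ : S (n - 1) lam * α - S (n - 2) lam = 0) :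
    y > 2 := by
  by_contra! hy
  have hS (z : ℝ) : IsChebyshevRec z (S · z) := fun i => hrec i z
  have hQy : chebyshevForm y (S (m - 1) y) (S (m - 2) y) = 1 := by
    have := (hS y).chebyshevForm_eq_one (hS0 y) (hS1 y) (m - 2)
    rwa [show m - 2 + 1 = m - 1 by ring] at this
  have hQ : chebyshevForm lam α 1 ≤ 0 := by
    rw [hα, hlam, chebyshevForm_riley y _ _ hQy]
    exact mul_nonpos_of_nonpos_of_nonneg (Odd.pow_nonpos (by decide) (by linarith))
      (by positivity)
  have hT := (hS lam).sub_one_mul_sub_sub_two α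
  have hneg1 := (hS lam).apply_neg_one (hS0 lam) (hS1 lam)
  have hT0 : S (0 - 1) lam * α - S (0 - 2) lam = 1 := by
    norm_num [hneg1, (hS lam).apply_neg_two (hS0 lam) (hS1 lam)]
  have hT1 : S (1 - 1) lam * α - S (1 - 2) lam = α := by norm_num [hS0, hneg1]
  have hpos := hT.pos (by rw [hlam]; positivity)
    (show chebyshevForm lam (S (1 - 1) lam * α - S (1 - 2) lam)
      (S (0 - 1) lam * α - S (0 - 2) lam) ≤ 0 by rwa [hT0, hT1])
    (show 0 < S (0 - 1) lam * α - S (0 - 2) lam by rw [hT0]; exact one_pos) n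
  exact hpos.ne' hφ

theorem stmt14 (S : ℤ → ℝ → ℝ) (hS0 : ∀ z, S 0 z = 1) (hS1 : ∀ z, S 1 z = z)
    (hrec : ∀ (i : ℤ) (z : ℝ), S (i + 1) z = z * S i z - S (i - 1) z)
    (m n : ℤ) (hm : 1 ≤ m) (hn : n ≠ 0)
    (y : ℝ)
    (α lam : ℝ)
    (hα : α = 1 - (y - 2) * S (m - 1) y * (S (m - 1) y - S (m - 2) y))
    (hlam : lam = 2 + (y - 2) ^ 2 * (S (m - 1) y) ^ 2)
    (hφ : S (n - 1) lam * α - S (n - 2) lam = 0) :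
    y > 2 :=
  stmt14_general S hS0 hS1 hrec m n y α lam hα hlam hφ
end

section
/- For λ ∈ ℂ with λ ≠ ±2 and T_n(λ) = 2 (where n ≥ 1), one has S_{n-1}(λ) = 0 and S_{n-2}(λ) = -1. -/
/-!
Both sequences are the Chebyshev polynomials `Polynomial.Chebyshev.S` and `Polynomial.Chebyshev.C`
evaluated at `λ`. Writing `C n = 2 S n - X S (n - 1)` and using the Cassini-type identity
`S (n - 1) ^ 2 + S n ^ 2 - X S (n - 1) S n = 1` gives `C n ^ 2 - 4 = (X ^ 2 - 4) S (n - 1) ^ 2`.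
So `C n (λ) = 2` with `λ ≠ ±2` forces `S (n - 1) (λ) = 0`; then `S n (λ) ^ 2 = 1` and
`2 S n (λ) = 2`, whence `(S n (λ) - 1) ^ 2 = 0`, and `S (n - 2) = X S (n - 1) - S n` gives `-1`.
-/

open Polynomial

section Recurrence

variable {R : Type*} [CommRing R]

theorem eq_of_rec_of_eq_zero_of_eq_one {x : R} {f g : ℤ → R} (h0 : f 0 = g 0) (h1 : f 1 = g 1)
    (hf : ∀ i, f (i + 1) = x * f i - f (i - 1)) (hg : ∀ i, g (i + 1) = x * g i - g (i - 1)) :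
    f = g := by
  funext i
  induction i using Polynomial.Chebyshev.induct with
  | zero => exact h0
  | one => exact h1
  | add_two n ih1 ih0 =>
    rw [show (n : ℤ) + 2 = n + 1 + 1 by ring, hf, hg, add_sub_cancel_right, ih1, ih0]
  | neg_add_one n ih0 ih1 => linear_combination hf (-n) - hg (-n) + x * ih0 - ih1

namespace Polynomial.Chebyshev

theorem eq_S_eval_of_rec {x : R} {f : ℤ → R} (h0 : f 0 = 1) (h1 : f 1 = x)
    (hf : ∀ i, f (i + 1) = x * f i - f (i - 1)) : f = fun i => (S R i).eval x :=
  eq_of_rec_of_eq_zero_of_eq_one (by simp [h0]) (by simp [h1]) hf (by simp [S_add_one])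

theorem eq_C_eval_of_rec {x : R} {f : ℤ → R} (h0 : f 0 = 2) (h1 : f 1 = x)
    (hf : ∀ i, f (i + 1) = x * f i - f (i - 1)) : f = fun i => (C R i).eval x :=
  eq_of_rec_of_eq_zero_of_eq_one (by simp [h0]) (by simp [h1]) hf (by simp [C_add_one])

theorem C_sq_sub_four (n : ℤ) : C R n ^ 2 - 4 = (X ^ 2 - 4) * S R (n - 1) ^ 2 := by
  have hcassini := S_sq_add_S_sq R (n - 1)
  rw [sub_add_cancel] at hcassini
  rw [C_eq_S_sub_X_mul_S]
  linear_combination 4 * hcassini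

variable [IsDomain R] {x : R} {n : ℤ}

theorem S_eval_sub_one_eq_zero_of_C_eval_eq_two (hx2 : x ≠ 2) (hxm2 : x ≠ -2)
    (h : (C R n).eval x = 2) : (S R (n - 1)).eval x = 0 := by
  have hprod : ((x - 2) * (x + 2)) * (S R (n - 1)).eval x ^ 2 = 0 := by
    have := congrArg (eval x) (C_sq_sub_four (R := R) n)
    simp only [eval_sub, eval_pow, eval_mul, eval_X, eval_ofNat, h] at this
    linear_combination -this
  have hx : (x - 2) * (x + 2) ≠ 0 :=
    mul_ne_zero (sub_ne_zero.mpr hx2) (fun h' => hxm2 (eq_neg_of_add_eq_zero_left h'))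
  exact pow_eq_zero_iff two_ne_zero |>.mp ((mul_eq_zero.mp hprod).resolve_left hx)

theorem S_eval_sub_two_eq_neg_one_of_C_eval_eq_two (hx2 : x ≠ 2) (hxm2 : x ≠ -2)
    (h : (C R n).eval x = 2) : (S R (n - 2)).eval x = -1 := by
  have hzero := S_eval_sub_one_eq_zero_of_C_eval_eq_two hx2 hxm2 h
  have hcassini := congrArg (eval x) (S_sq_add_S_sq R (n - 1))
  have hC := congrArg (eval x) (C_eq_S_sub_X_mul_S R n)
  simp only [sub_add_cancel, eval_sub, eval_add, eval_pow, eval_mul, eval_X, eval_ofNat,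
    eval_one, hzero, h] at hcassini hC
  have hone : (S R n).eval x = 1 :=
    sub_eq_zero.mp (pow_eq_zero_iff two_ne_zero |>.mp (by linear_combination hcassini + hC))
  simp only [S_sub_two, eval_sub, eval_mul, eval_X, hzero, hone]
  ring

end Polynomial.Chebyshev

end Recurrence

theorem stmt16_general (lam : ℂ) (hlam2 : lam ≠ 2) (hlamm2 : lam ≠ -2)
    (S T : ℤ → ℂ) (hS0 : S 0 = 1) (hS1 : S 1 = lam)
    (hSrec : ∀ i : ℤ, S (i + 1) = lam * S i - S (i - 1))
    (hT0 : T 0 = 2) (hT1 : T 1 = lam)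
    (hTrec : ∀ i : ℤ, T (i + 1) = lam * T i - T (i - 1))
    (n : ℤ) (h : T n = 2) :
    S (n - 1) = 0 ∧ S (n - 2) = -1 := by
  obtain rfl := Polynomial.Chebyshev.eq_S_eval_of_rec hS0 hS1 hSrec
  obtain rfl := Polynomial.Chebyshev.eq_C_eval_of_rec hT0 hT1 hTrec
  exact ⟨Polynomial.Chebyshev.S_eval_sub_one_eq_zero_of_C_eval_eq_two hlam2 hlamm2 h,
    Polynomial.Chebyshev.S_eval_sub_two_eq_neg_one_of_C_eval_eq_two hlam2 hlamm2 h⟩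

theorem stmt16 (lam : ℂ) (hlam2 : lam ≠ 2) (hlamm2 : lam ≠ -2)
    (S T : ℤ → ℂ) (hS0 : S 0 = 1) (hS1 : S 1 = lam)
    (hSrec : ∀ i : ℤ, S (i + 1) = lam * S i - S (i - 1))
    (hT0 : T 0 = 2) (hT1 : T 1 = lam)
    (hTrec : ∀ i : ℤ, T (i + 1) = lam * T i - T (i - 1))
    (n : ℤ) (hn : 1 ≤ n) (h : T n = 2) :
    S (n - 1) = 0 ∧ S (n - 2) = -1 :=
  stmt16_general lam hlam2 hlamm2 S T hS0 hS1 hSrec hT0 hT1 hTrec n h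
end

section
/- Let n > 1 and suppose λ ∈ ℂ satisfies T_n(λ) = λ and λ ≠ 2. Then λ = -2, or λ = 2·cos(2jπ/(n-1)) for some integer 1 ≤ j ≤ n-2 with j ≠ (n-1)/2, or λ = 2·cos(2jπ/(n+1)) for some integer 1 ≤ j ≤ n with j ≠ (n+1)/2. -/
open Complex in
lemma aux19 (β β' lam : ℂ) (m : ℕ) (hm : 0 < m) (hbb : β * β' = 1)
    (hl : lam = β + β') (hβm : β ^ m = 1) (h2 : lam ≠ 2) :
    lam = -2 ∨ ∃ j : ℕ, 1 ≤ j ∧ j ≤ m - 1 ∧ 2 * j ≠ m ∧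
      lam = ((2 * Real.cos (2 * j * Real.pi / m) : ℝ) : ℂ) := by
  have : NeZero m := ⟨hm.ne'⟩
  obtain ⟨j, hjm, hj⟩ := (Complex.isPrimitiveRoot_exp m hm.ne').eq_pow_of_pow_eq_one hβm
  have hβ : β = Complex.exp (((2 * j * Real.pi / m : ℝ) : ℂ) * Complex.I) := by
    rw [← hj, ← Complex.exp_nat_mul]
    congr 1
    push_cast
    ring
  have hβ0 : β ≠ 0 := left_ne_zero_of_mul_eq_one hbb
  have hβ' : β' = Complex.exp (-(((2 * j * Real.pi / m : ℝ) : ℂ) * Complex.I)) := by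
    rw [← inv_eq_of_mul_eq_one_right hbb, hβ, Complex.exp_neg]
  have hlam2 : lam = ((2 * Real.cos (2 * j * Real.pi / m) : ℝ) : ℂ) := by
    rw [hl, hβ, hβ']
    push_cast
    rw [← neg_mul, ← Complex.two_cos]
  rcases Nat.eq_zero_or_pos j with hj0 | hj1
  · exfalso
    apply h2
    rw [hlam2, hj0]
    norm_num
  by_cases hjh : 2 * j = m
  · left
    rw [hlam2]
    have hme : (m : ℝ) = 2 * j := by exact_mod_cast hjh.symm
    have : (2 : ℝ) * j * Real.pi / m = Real.pi := by
      rw [hme]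
      field_simp
    rw [this]
    norm_num
  · right
    exact ⟨j, hj1, by omega, hjh, hlam2⟩

theorem stmt19 (T : ℤ → ℂ) (lam : ℂ) (hT0 : T 0 = 2) (hT1 : T 1 = lam)
    (hrec : ∀ i : ℤ, T (i + 1) = lam * T i - T (i - 1))
    (n : ℕ) (hn : 1 < n) (h : T n = lam) (hlam : lam ≠ 2) :
    lam = -2 ∨
    (∃ j : ℕ, 1 ≤ j ∧ j ≤ n - 2 ∧ 2 * j ≠ n - 1 ∧
      lam = ((2 * Real.cos (2 * j * Real.pi / (n - 1)) : ℝ) : ℂ)) ∨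
    (∃ j : ℕ, 1 ≤ j ∧ j ≤ n ∧ 2 * j ≠ n + 1 ∧
      lam = ((2 * Real.cos (2 * j * Real.pi / (n + 1)) : ℝ) : ℂ)) := by
  -- find a root β of z² - λz + 1
  obtain ⟨s, hs⟩ := IsAlgClosed.exists_pow_nat_eq (k := ℂ) (lam ^ 2 - 4) zero_lt_two
  set β := (lam + s) / 2 with hβdef
  set β' := (lam - s) / 2 with hβ'def
  have hbb : β * β' = 1 := by
    rw [hβdef, hβ'def]
    field_simp
    linear_combination -hs
  have hl : lam = β + β' := by rw [hβdef, hβ'def]; ring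
  -- closed form for T
  have key : ∀ k : ℕ, T k = β ^ k + β' ^ k := by
    intro k
    induction k using Nat.twoStepInduction with
    | zero => rw [Nat.cast_zero, hT0]; norm_num
    | one => simpa using hT1.trans hl
    | more k ih1 ih2 =>
      have hr := hrec ((k : ℤ) + 1)
      have e1 : ((k : ℤ) + 1 + 1) = ((k + 2 : ℕ) : ℤ) := by push_cast; ring
      have e2 : ((k : ℤ) + 1 - 1) = ((k : ℕ) : ℤ) := by ring
      have e3 : ((k : ℤ) + 1) = ((k + 1 : ℕ) : ℤ) := by push_cast; ring
      rw [e1, e2] at hr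
      rw [e3] at hr
      rw [hr, ih1, ih2, hl]
      ring_nf
      linear_combination (β ^ k + β' ^ k) * hbb
  obtain ⟨a, rfl⟩ : ∃ a, n = a + 2 := ⟨n - 2, by omega⟩
  have heq : β ^ (a + 2) + β' ^ (a + 2) = β + β' := by
    rw [← key, ← hl]; exact h
  have hpow : β ^ (a + 2) * β' ^ (a + 2) = 1 := by
    rw [← mul_pow, hbb, one_pow]
  have hzero : (β ^ (a + 3) - 1) * (β ^ (a + 1) - 1) = 0 := by
    linear_combination β ^ (a + 2) * heq - hpow + β ^ (a + 1) * hbb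
  rcases mul_eq_zero.mp hzero with hc | hc
  · -- β^(n+1) = 1
    have hβm : β ^ (a + 3) = 1 := sub_eq_zero.mp hc
    rcases aux19 β β' lam (a + 3) (by omega) hbb hl hβm hlam with h1 | ⟨j, hj1, hj2, hj3, hj4⟩
    · exact Or.inl h1
    · refine Or.inr (Or.inr ⟨j, hj1, by omega, by omega, ?_⟩)
      rw [hj4]
      norm_num
      ring_nf
  · have hβm : β ^ (a + 1) = 1 := sub_eq_zero.mp hc
    rcases aux19 β β' lam (a + 1) (by omega) hbb hl hβm hlam with h1 | ⟨j, hj1, hj2, hj3, hj4⟩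
    · exact Or.inl h1
    · refine Or.inr (Or.inl ⟨j, hj1, by omega, by omega, ?_⟩)
      rw [hj4]
      norm_num
      ring_nf
end
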